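/- Let G be a graph with n edges that admits a near α-labeling. Then for every positive integer x there exists a cyclic G-decomposition of the complete graph K_{2nx+1}, i.e., a partition of the edge set of the complete graph on vertex set ℤ/(2nx+1)ℤ into subgraphs each isomorphic to G, such that the set of subgraphs in the partition is invariant under the translation v ↦ v + 1 of ℤ/(2nx+1)ℤ. -/

import Mathlib

/-- `f` is a graceful (β-) labeling of the graph `G` with vertex set `S`:
`f` is injective on `S` with values in `{0,…,q}` where `q` is the number of
edges of `G`, all edges of `G` join vertices of `S`, and the induced edge
labels `|f u - f v|` are pairwise distinct. -/
def IsGracefulOn {α : Type*} (G : SimpleGraph α) (S : Set α) (f : α → ℕ) : Prop :=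
  (∀ u v, G.Adj u v → u ∈ S ∧ v ∈ S) ∧
  Set.InjOn f S ∧
  (∀ v ∈ S, f v ≤ G.edgeSet.ncard) ∧
  ∀ u v u' v', G.Adj u v → G.Adj u' v' →
    max (f u) (f v) - min (f u) (f v) = max (f u') (f v') - min (f u') (f v') →
    s(u, v) = s(u', v')

/-- `f` is an α-labeling of `G` (with vertex set `S`) with characteristic `k`:
a graceful labeling such that every edge joins a label `≤ k` to a label `> k`. -/
def IsAlphaOn {α : Type*} (G : SimpleGraph α) (S : Set α) (f : α → ℕ) (k : ℕ) : Prop :=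
  IsGracefulOn G S f ∧
  ∀ u v, G.Adj u v → min (f u) (f v) ≤ k ∧ k < max (f u) (f v)

/-- `f` is a near α-labeling of `G` with respect to the partition `(A, B)` of
its vertex set: a graceful labeling such that every edge is of the form `uv`
with `u ∈ A`, `v ∈ B` and `f u < f v`. -/
def IsNearAlphaOn {α : Type*} (G : SimpleGraph α) (A B : Set α) (f : α → ℕ) : Prop :=
  IsGracefulOn G (A ∪ B) f ∧ Disjoint A B ∧
  ∀ u v, G.Adj u v → (u ∈ A ∧ v ∈ B ∧ f u < f v) ∨ (v ∈ A ∧ u ∈ B ∧ f v < f u)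

/-!
Raising the labels of `B` by `j n` for `0 ≤ j < x` turns the near α-labeling `f` into `x`
injective labelings with values in `[0, n x]`; in the `j`-th one the edges carry the labels
`j n + 1, …, j n + n`, so together they realise every `δ ∈ [1, n x]` exactly once as a difference
along an edge. Modulo `2 n x + 1` each nonzero residue is `±δ` for exactly one such `δ`, so the `x`
labelings form a difference family in `ZMod (2 n x + 1)`, and the translates of the corresponding
copies of `G` form a cyclic `G`-decomposition of the complete graph.
-/

open Function

section DifferenceFamily

variable {V M J : Type*} [AddCommGroup M] (G : SimpleGraph V)

def IsDifferenceFamily (φ : J → V → M) : Prop :=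
  ∀ d : M, d ≠ 0 → ∃! p : J × V × V, G.Adj p.2.1 p.2.2 ∧ φ p.1 p.2.2 - φ p.1 p.2.1 = d

def translates (ψ : J → V ↪ M) : Set (SimpleGraph M) :=
  Set.range fun p : J × M => G.map ((ψ p.1).trans (Equiv.addRight p.2).toEmbedding)

variable {G}

theorem map_translate_adj_iff (ψ : V ↪ M) (i a b : M) :
    (G.map (ψ.trans (Equiv.addRight i).toEmbedding)).Adj a b ↔
      ∃ u v, G.Adj u v ∧ ψ u + i = a ∧ ψ v + i = b := by
  simp [SimpleGraph.map_adj]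

theorem iUnion_edgeSet_translates {ψ : J → V ↪ M} (hψ : IsDifferenceFamily G fun j => ψ j) :
    ⋃ K ∈ translates G ψ, K.edgeSet = (⊤ : SimpleGraph M).edgeSet := by
  refine Set.Subset.antisymm (Set.iUnion₂_subset fun K _ => K.edgeSet_subset_edgeSet.mpr le_top) ?_
  intro e
  induction e using Sym2.ind with
  | _ a b =>
    intro hab
    obtain ⟨⟨j, u, v⟩, ⟨huv, hd⟩, -⟩ := hψ (b - a) (sub_ne_zero.mpr (Ne.symm hab))
    dsimp only at huv hd
    refine Set.mem_biUnion ⟨(j, a - ψ j u), rfl⟩ ((map_translate_adj_iff _ _ _ _).mpr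
      ⟨u, v, huv, add_sub_cancel _ _, ?_⟩)
    rw [← add_sub_assoc, add_sub_right_comm, hd, sub_add_cancel]

theorem pairwise_disjoint_edgeSet_translates {ψ : J → V ↪ M}
    (hψ : IsDifferenceFamily G fun j => ψ j) :
    (translates G ψ).Pairwise fun K K' => Disjoint K.edgeSet K'.edgeSet := by
  rintro _ ⟨⟨j, i⟩, rfl⟩ _ ⟨⟨j', i'⟩, rfl⟩ hne
  refine Set.disjoint_left.mpr fun e he he' => hne ?_
  induction e using Sym2.ind with
  | _ a b =>
    obtain ⟨u, v, huv, rfl, rfl⟩ := (map_translate_adj_iff _ _ _ _).mp he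
    obtain ⟨u', v', huv', hu, hv⟩ := (map_translate_adj_iff _ _ _ _).mp he'
    have hd : ψ j' v' - ψ j' u' = ψ j v - ψ j u := by
      rw [← add_sub_add_right_eq_sub _ _ i', hu, hv, add_sub_add_right_eq_sub]
    obtain ⟨_, _, huniq⟩ := hψ (ψ j v - ψ j u) (sub_ne_zero.mpr ((ψ j).injective.ne huv.ne'))
    obtain ⟨rfl, rfl, rfl⟩ : (j', u', v') = (j, u, v) :=
      (huniq _ ⟨huv', hd⟩).trans (huniq _ ⟨huv, rfl⟩).symm
    dsimp only at hu ⊢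
    rw [add_left_cancel hu]

theorem image_map_addRight_translates (ψ : J → V ↪ M) (c : M) :
    (fun K : SimpleGraph M => K.map (Equiv.addRight c).toEmbedding) '' translates G ψ =
      translates G ψ := by
  let block : J × M → SimpleGraph M := fun p =>
    G.map ((ψ p.1).trans (Equiv.addRight p.2).toEmbedding)
  have hshift : (fun K : SimpleGraph M => K.map (Equiv.addRight c).toEmbedding) ∘ block =
      block ∘ (Equiv.refl J).prodCongr (Equiv.addRight c) := by
    ext1 ⟨j, i⟩
    simp only [comp_apply, block, SimpleGraph.map_map]
    congr 1
    ext v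
    simp [add_assoc]
  rw [translates, ← Set.range_comp]
  exact (congrArg Set.range hshift).trans (EquivLike.range_comp _ _)

theorem existsUnique_adj_sub_eq_neg_iff (φ : J → V → M) (d : M) :
    (∃! p : J × V × V, G.Adj p.2.1 p.2.2 ∧ φ p.1 p.2.2 - φ p.1 p.2.1 = -d) ↔
      ∃! p : J × V × V, G.Adj p.2.1 p.2.2 ∧ φ p.1 p.2.2 - φ p.1 p.2.1 = d :=
  Equiv.existsUnique_congr ((Equiv.refl J).prodCongr (Equiv.prodComm V V)) fun _ => by
    simp only [Equiv.prodCongr_apply, Prod.map, Equiv.refl_apply, Equiv.prodComm_apply,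
      Prod.fst_swap, Prod.snd_swap, G.adj_comm]
    rw [← neg_sub, neg_inj]

end DifferenceFamily

theorem ZMod.intCast_injOn_Icc (P : ℕ) :
    Set.InjOn (Int.cast : ℤ → ZMod (2 * P + 1)) (Set.Icc (-P : ℤ) P) := by
  intro a ha b hb hab
  rw [ZMod.intCast_eq_intCast_iff_dvd_sub] at hab
  have := Int.eq_zero_of_abs_lt_dvd hab (by rw [abs_lt]; push_cast; grind)
  omega

section IntegerLabels

variable {V J : Type*} {G : SimpleGraph V} {P : ℕ}

theorem injective_intCast_comp {φ : V → ℤ} (hφ : Injective φ)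
    (hφP : ∀ v, φ v ∈ Set.Icc (0 : ℤ) P) : Injective fun v => (φ v : ZMod (2 * P + 1)) :=
  fun u v h => hφ <| ZMod.intCast_injOn_Icc P
    (Set.Icc_subset_Icc (by simp) le_rfl (hφP u)) (Set.Icc_subset_Icc (by simp) le_rfl (hφP v)) h

theorem isDifferenceFamily_intCast {φ : J → V → ℤ} (hφP : ∀ j v, φ j v ∈ Set.Icc (0 : ℤ) P)
    (hpos : ∀ δ : ℤ, 0 < δ → δ ≤ P →
      ∃! p : J × V × V, G.Adj p.2.1 p.2.2 ∧ φ p.1 p.2.2 - φ p.1 p.2.1 = δ) :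
    IsDifferenceFamily G fun j v => (φ j v : ZMod (2 * P + 1)) := by
  have hall : ∀ δ : ℤ, δ ≠ 0 → |δ| ≤ P →
      ∃! p : J × V × V, G.Adj p.2.1 p.2.2 ∧ φ p.1 p.2.2 - φ p.1 p.2.1 = δ := by
    intro δ hδ hδP
    rcases hδ.lt_or_gt with hneg | hpos'
    · rw [← existsUnique_adj_sub_eq_neg_iff]
      exact hpos (-δ) (by omega) (by rw [abs_le] at hδP; omega)
    · exact hpos δ hpos' (le_of_abs_le hδP)
  intro d hd
  -- `d.valMinAbs` is the representative of `d` in `[-P, P]`.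
  have hδP : |d.valMinAbs| ≤ P := by
    have := ZMod.natAbs_valMinAbs_le d
    rw [Int.abs_eq_natAbs]
    omega
  obtain ⟨p, hp, huniq⟩ := hall d.valMinAbs ((ZMod.valMinAbs_eq_zero d).not.mpr hd) hδP
  refine ⟨p, ⟨hp.1, ?_⟩, fun q hq => huniq q ⟨hq.1, ?_⟩⟩
  · rw [← ZMod.coe_valMinAbs d, ← hp.2]
    push_cast; rfl
  · have hq2 := hq.2
    dsimp only at hq2
    rw [← ZMod.coe_valMinAbs d, ← Int.cast_sub] at hq2
    have := hφP q.1 q.2.1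
    have := hφP q.1 q.2.2
    rw [abs_le] at hδP
    exact ZMod.intCast_injOn_Icc P (by constructor <;> grind) (by constructor <;> grind) hq2

end IntegerLabels

theorem IsGracefulOn.exists_adj_add_eq {α : Type*} {G : SimpleGraph α} {S : Set α} {f : α → ℕ}
    (hf : IsGracefulOn G S f) {d : ℕ} (hd1 : 1 ≤ d) (hd : d ≤ G.edgeSet.ncard) :
    ∃ u v, G.Adj u v ∧ f u + d = f v := by
  obtain ⟨hS, hinj, hle, hlabel⟩ := hf
  let label : Sym2 α → ℕ :=
    Sym2.lift ⟨fun u v => max (f u) (f v) - min (f u) (f v),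
      fun u v => by simp only [max_comm, min_comm]⟩
  have hmaps : label '' G.edgeSet ⊆ Set.Icc 1 G.edgeSet.ncard := by
    rintro _ ⟨e, he, rfl⟩
    induction e using Sym2.ind with
    | _ u v =>
      have hne : f u ≠ f v := fun h => he.ne (hinj (hS u v he).1 (hS u v he).2 h)
      have := hle u (hS u v he).1
      have := hle v (hS u v he).2
      simp only [label, Sym2.lift_mk, Set.mem_Icc]
      omega
  have hinjOn : Set.InjOn label G.edgeSet := by
    intro e he e' he'
    induction e using Sym2.ind with
    | _ u v =>
      induction e' using Sym2.ind with
      | _ u' v' => exact hlabel u v u' v' he he'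
  have himage : label '' G.edgeSet = Set.Icc 1 G.edgeSet.ncard :=
    Set.eq_of_subset_of_ncard_le hmaps
      (by rw [hinjOn.ncard_image, Set.ncard_Icc_nat]; omega) (Set.finite_Icc _ _)
  obtain ⟨e, he, hed⟩ := himage.symm ▸ Set.mem_Icc.mpr ⟨hd1, hd⟩
  induction e using Sym2.ind with
  | _ u v =>
    simp only [label, Sym2.lift_mk] at hed
    rcases le_total (f u) (f v) with h | h
    · exact ⟨u, v, he, by omega⟩
    · exact ⟨v, u, he.symm, by omega⟩

open Classical in
noncomputable def blockLabel {V : Type*} (A : Set V) (f : V → ℕ) (k : ℕ) (v : V) : ℤ :=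
  f v + if v ∈ A then 0 else (k : ℤ)

namespace IsNearAlphaOn

variable {V : Type*} {G : SimpleGraph V} {A B : Set V} {f : V → ℕ} {u v u' v' : V}

theorem mem_right_of_adj (hf : IsNearAlphaOn G A B f) (huv : G.Adj u v) (hu : u ∈ A) :
    v ∈ B ∧ f u < f v := by
  rcases hf.2.2 u v huv with ⟨-, hv, hlt⟩ | ⟨-, hu', -⟩
  · exact ⟨hv, hlt⟩
  · exact absurd hu' (Set.disjoint_left.mp hf.2.1 hu)

theorem exists_adj_add_eq (hf : IsNearAlphaOn G A B f) {d : ℕ} (hd1 : 1 ≤ d)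
    (hd : d ≤ G.edgeSet.ncard) : ∃ u v, G.Adj u v ∧ u ∈ A ∧ f u + d = f v := by
  obtain ⟨u, v, huv, hfd⟩ := hf.1.exists_adj_add_eq hd1 hd
  rcases hf.2.2 u v huv with ⟨hu, -⟩ | ⟨-, -, hlt⟩
  · exact ⟨u, v, huv, hu, hfd⟩
  · omega

theorem eq_of_add_eq (hf : IsNearAlphaOn G A B f) (huv : G.Adj u v) (huv' : G.Adj u' v')
    (hu : u ∈ A) (hu' : u' ∈ A) {d : ℕ} (hd : f u + d = f v) (hd' : f u' + d = f v') :
    u = u' ∧ v = v' := by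
  have hs : s(u, v) = s(u', v') := hf.1.2.2.2 u v u' v' huv huv' (by omega)
  rcases Sym2.eq_iff.mp hs with h | ⟨-, rfl⟩
  · exact h
  · exact absurd hu' (Set.disjoint_right.mp hf.2.1 (hf.mem_right_of_adj huv hu).1)

theorem notMem_left_of_eq_ncard (hf : IsNearAlphaOn G A B f) (hn : 0 < G.edgeSet.ncard)
    (hu : f u = G.edgeSet.ncard) : u ∉ A := by
  intro huA
  obtain ⟨u₀, v₀, huv₀, hu₀, hv₀⟩ := hf.exists_adj_add_eq hn le_rfl
  have hv₀B := (hf.mem_right_of_adj huv₀ hu₀).1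
  have := hf.1.2.2.1 v₀ (Or.inr hv₀B)
  have huv : u = v₀ := hf.1.2.1 (Or.inl huA) (Or.inr hv₀B) (by omega)
  exact Set.disjoint_left.mp hf.2.1 huA (huv ▸ hv₀B)

theorem blockLabel_sub_of_mem (hf : IsNearAlphaOn G A B f) (huv : G.Adj u v) (hu : u ∈ A)
    (k : ℕ) : blockLabel A f k v - blockLabel A f k u = f v - f u + k := by
  have hv : v ∉ A := Set.disjoint_right.mp hf.2.1 (hf.mem_right_of_adj huv hu).1
  simp only [blockLabel, hu, hv, if_true, if_false]
  ring

theorem mem_left_of_blockLabel_sub_pos (hf : IsNearAlphaOn G A B f) (huv : G.Adj u v) {k : ℕ}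
    (hpos : 0 < blockLabel A f k v - blockLabel A f k u) : u ∈ A := by
  by_contra hu
  have hv : v ∈ A := by
    rcases hf.2.2 u v huv with ⟨hu', -⟩ | ⟨hv, -⟩
    · exact absurd hu' hu
    · exact hv
  have hlt := (hf.mem_right_of_adj huv.symm hv).2
  simp only [blockLabel, hu, hv, if_true, if_false] at hpos
  omega

-- Raising `B` by a positive multiple of `n` could only collide with `A` at the labels
-- `0` in `B` and `n` in `A`, which `notMem_left_of_eq_ncard` rules out.
theorem blockLabel_ne_of_mem_of_notMem (hf : IsNearAlphaOn G A B f) (hu : u ∈ A) (hu' : u' ∉ A)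
    (hu'AB : u' ∈ A ∪ B) (j : ℕ) :
    blockLabel A f (j * G.edgeSet.ncard) u ≠ blockLabel A f (j * G.edgeSet.ncard) u' := by
  intro h
  simp only [blockLabel, hu, hu', if_true, if_false] at h
  have hfu := hf.1.2.2.1 u (Or.inl hu)
  rcases Nat.eq_zero_or_pos (j * G.edgeSet.ncard) with hk | hk
  · exact hu' (hf.1.2.1 (Or.inl hu) hu'AB (by rw [hk] at h; omega) ▸ hu)
  · have hn : 0 < G.edgeSet.ncard := Nat.pos_of_mul_pos_left hk
    have : G.edgeSet.ncard ≤ j * G.edgeSet.ncard :=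
      Nat.le_mul_of_pos_left _ (Nat.pos_of_mul_pos_right hk)
    exact hf.notMem_left_of_eq_ncard hn (by omega) hu

theorem blockLabel_injective (hf : IsNearAlphaOn G A B f) (hAB : A ∪ B = Set.univ) (j : ℕ) :
    Injective (blockLabel A f (j * G.edgeSet.ncard)) := by
  have hinj : Injective f := fun u u' h =>
    hf.1.2.1 (hAB ▸ Set.mem_univ u) (hAB ▸ Set.mem_univ u') h
  intro u u' h
  by_cases hu : u ∈ A <;> by_cases hu' : u' ∈ A
  · simp only [blockLabel, hu, hu', if_true] at h
    exact hinj (by omega)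
  · exact absurd h (hf.blockLabel_ne_of_mem_of_notMem hu hu' (hAB ▸ Set.mem_univ u') j)
  · exact absurd h.symm (hf.blockLabel_ne_of_mem_of_notMem hu' hu (hAB ▸ Set.mem_univ u) j)
  · simp only [blockLabel, hu, hu', if_false] at h
    exact hinj (by omega)

theorem blockLabel_mem_Icc (hf : IsNearAlphaOn G A B f) (hAB : A ∪ B = Set.univ) {j x : ℕ}
    (hj : j < x) (v : V) :
    blockLabel A f (j * G.edgeSet.ncard) v ∈ Set.Icc (0 : ℤ) (G.edgeSet.ncard * x : ℕ) := by
  have hfv := hf.1.2.2.1 v (hAB ▸ Set.mem_univ v)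
  have hjx : (j + 1) * G.edgeSet.ncard ≤ G.edgeSet.ncard * x := by
    rw [mul_comm _ x]; exact Nat.mul_le_mul_right _ hj
  unfold blockLabel
  split_ifs <;> constructor <;> push_cast at hjx ⊢ <;> nlinarith

theorem existsUnique_blockLabel_sub (hf : IsNearAlphaOn G A B f) {x : ℕ} {δ : ℤ} (hδ : 0 < δ)
    (hδx : δ ≤ (G.edgeSet.ncard * x : ℕ)) :
    ∃! p : Fin x × V × V, G.Adj p.2.1 p.2.2 ∧
      blockLabel A f (p.1 * G.edgeSet.ncard) p.2.2 -
        blockLabel A f (p.1 * G.edgeSet.ncard) p.2.1 = δ := by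
  set n := G.edgeSet.ncard
  lift δ to ℕ using hδ.le
  have hn : 0 < n := Nat.pos_of_mul_pos_right (by omega : 0 < n * x)
  have hsol : ∀ (j : ℕ) (u v : V), G.Adj u v →
      (blockLabel A f (j * n) v - blockLabel A f (j * n) u = δ ↔
        u ∈ A ∧ j = (δ - 1) / n ∧ f u + ((δ - 1) % n + 1) = f v) := by
    intro j u v huv
    constructor
    · intro h
      have hu := hf.mem_left_of_blockLabel_sub_pos huv (h ▸ hδ)
      obtain ⟨hvB, hlt⟩ := hf.mem_right_of_adj huv hu
      have hfv := hf.1.2.2.1 v (Or.inr hvB)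
      rw [hf.blockLabel_sub_of_mem huv hu, mul_comm] at h
      obtain ⟨hq, hr⟩ := (Nat.div_mod_unique hn).mpr
        ⟨(by omega : f v - f u - 1 + n * j = δ - 1), (by omega : f v - f u - 1 < n)⟩
      exact ⟨hu, hq.symm, by omega⟩
    · rintro ⟨hu, rfl, hfd⟩
      rw [hf.blockLabel_sub_of_mem huv hu, ← hfd]
      have := Nat.div_add_mod' (δ - 1) n
      generalize (δ - 1) / n * n = t at *
      push_cast
      omega
  refine existsUnique_of_exists_of_unique ?_ ?_
  · have hj : (δ - 1) / n < x := (Nat.div_lt_iff_lt_mul hn).mpr (by rw [mul_comm]; omega)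
    obtain ⟨u, v, huv, hu, hfd⟩ :=
      hf.exists_adj_add_eq (d := (δ - 1) % n + 1) le_add_self (Nat.mod_lt (δ - 1) hn)
    exact ⟨(⟨(δ - 1) / n, hj⟩, u, v), huv, (hsol _ u v huv).mpr ⟨hu, rfl, hfd⟩⟩
  · rintro ⟨j, u, v⟩ ⟨j', u', v'⟩ ⟨huv, h⟩ ⟨huv', h'⟩
    obtain ⟨hu, hj, hd⟩ := (hsol j u v huv).mp h
    obtain ⟨hu', hj', hd'⟩ := (hsol j' u' v' huv').mp h'
    obtain ⟨rfl, rfl⟩ := hf.eq_of_add_eq huv huv' hu hu' hd hd'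
    rw [Fin.ext (hj.trans hj'.symm)]

end IsNearAlphaOn

theorem stmt10_general {V : Type*} (G : SimpleGraph V) (n : ℕ)
    (hn : G.edgeSet.ncard = n)
    (hna : ∃ (f : V → ℕ) (A B : Set V), A ∪ B = Set.univ ∧ IsNearAlphaOn G A B f)
    (x : ℕ) :
    ∃ D : Set (SimpleGraph (ZMod (2 * n * x + 1))),
      (∀ K ∈ D, ∃ φ : V ↪ ZMod (2 * n * x + 1), K = G.map φ) ∧
      (⋃ K ∈ D, K.edgeSet) = (⊤ : SimpleGraph (ZMod (2 * n * x + 1))).edgeSet ∧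
      (D.Pairwise fun K K' => Disjoint K.edgeSet K'.edgeSet) ∧
      (fun K : SimpleGraph (ZMod (2 * n * x + 1)) =>
          K.map (Equiv.addRight (1 : ZMod (2 * n * x + 1))).toEmbedding) '' D
        = D := by
  obtain ⟨f, A, B, hAB, hf⟩ := hna
  subst hn
  rw [show 2 * G.edgeSet.ncard * x + 1 = 2 * (G.edgeSet.ncard * x) + 1 by ring]
  let ψ : Fin x → V ↪ ZMod (2 * (G.edgeSet.ncard * x) + 1) := fun j =>
    ⟨_, injective_intCast_comp (hf.blockLabel_injective hAB j) (hf.blockLabel_mem_Icc hAB j.2)⟩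
  have hψ : IsDifferenceFamily G fun j => ψ j :=
    isDifferenceFamily_intCast (fun j => hf.blockLabel_mem_Icc hAB j.2)
      fun _ hδ hδx => hf.existsUnique_blockLabel_sub hδ hδx
  exact ⟨translates G ψ, fun _ ⟨_, hp⟩ => ⟨_, hp.symm⟩, iUnion_edgeSet_translates hψ,
    pairwise_disjoint_edgeSet_translates hψ, image_map_addRight_translates ψ 1⟩

/-- If a graph `G` with `n` edges admits a near
α-labeling, then for every positive integer `x` there is a cyclic
`G`-decomposition of the complete graph on `ℤ/(2nx+1)ℤ`: a family of copies of
`G` whose edge sets partition the edges of the complete graph, the family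
being invariant under the translation `v ↦ v + 1`. -/
theorem stmt10 {V : Type*} (G : SimpleGraph V) (n : ℕ)
    (hn : G.edgeSet.ncard = n)
    (hna : ∃ (f : V → ℕ) (A B : Set V), A ∪ B = Set.univ ∧ IsNearAlphaOn G A B f)
    (x : ℕ) (hx : 0 < x) :
    ∃ D : Set (SimpleGraph (ZMod (2 * n * x + 1))),
      (∀ K ∈ D, ∃ φ : V ↪ ZMod (2 * n * x + 1), K = G.map φ) ∧
      (⋃ K ∈ D, K.edgeSet) = (⊤ : SimpleGraph (ZMod (2 * n * x + 1))).edgeSet ∧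
      (D.Pairwise fun K K' => Disjoint K.edgeSet K'.edgeSet) ∧
      (fun K : SimpleGraph (ZMod (2 * n * x + 1)) =>
          K.map (Equiv.addRight (1 : ZMod (2 * n * x + 1))).toEmbedding) '' D
        = D :=
  stmt10_general G n hn hna x
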